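/- Coverage of the Pooling CDFs method, upper bound: Suppose the groups Z̃_1,…,Z̃_{K+1} satisfy hierarchical exchangeability, a measurable score function s is fitted on training groups Z̃_1,…,Z̃_{K₀}, the Pooling CDFs prediction set is Ĉ(x) = {y : s(x,y) ≤ T} with T = inf{t : (1/K₁) Σ_{k=K₀+1}^{K} (1/N_k) Σ_{i=1}^{N_k} 1{s(Z_{k,i}) ≤ t} ≥ 1−α} (K₁ = K − K₀), the test point is (X_test, Y_test) = Z_{K+1,1}, and the scores s(Z_{k,i}) for calibration and test groups are almost surely distinct across distinct groups. Then P(Y_test ∈ Ĉ(X_test)) ≤ 1 − α + (1+α)/(K₁+1). -/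

import Mathlib

/-!
For an observation `(j, i)` of one of the held-out groups `K₀, …, K`, let
`Φ j i = ∑_{k ≠ j} #{i' < N_k | s(Z_{k,i'}) < s(Z_{j,i})} / N_k`, the sum running over the other
held-out groups. If the test score `s(Z_{K,0})` is covered, then `Φ K 0 < K₁ (1 - α)`, because
the pooled CDF of the calibration groups only jumps at their scores. Exchangeability of the groups
gives this event the same probability for every held-out group `j`, and exchangeability within
group `j` the same probability for each of its observations; hence its probability is the
expectation of the average, over the `K₁ + 1` held-out groups and their observations, of
`1{Φ j i < K₁ (1 - α)}`. When scores in different groups differ, that average is at most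
`(K₁ (1 - α) + 2) / (K₁ + 1)`: the counted observations lie at or below the largest counted score
`v`, those strictly below `v` carry pooled mass less than `K₁ (1 - α) + 1`, and those equal to `v`
all lie in one group.
-/

open MeasureTheory ProbabilityTheory
open scoped ENNReal

noncomputable section

/-- Extend a permutation of `Fin m` to `ℕ` by the identity outside `{0, …, m-1}`. -/
def permExt {m : ℕ} (σ : Equiv.Perm (Fin m)) : ℕ → ℕ :=
  fun i => if h : i < m then (σ ⟨i, h⟩ : ℕ) else i

/-- The representation of the groups `0, …, L-1` of a hierarchical data set:
group `k` is recorded as the pair of its size `N k ω` and its sequence of observations. -/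
def hierData {Ω 𝒵 : Type*} (L : ℕ) (N : ℕ → Ω → ℕ) (Z : ℕ → ℕ → Ω → 𝒵) :
    Ω → Fin L → ℕ × (ℕ → 𝒵) :=
  fun ω k => (N k.1 ω, fun i => Z k.1 i ω)

/-- Hierarchical exchangeability (Definition 1.1) of the groups `0, …, L-1`:
(i) the groups are exchangeable with each other, and (ii) for each `k` and each `m`
with `P(N_k = m) > 0`, conditionally on `N_k = m` the first `m` observations within
group `k` are exchangeable. -/
def HierExch {Ω 𝒵 : Type*} [MeasurableSpace Ω] [MeasurableSpace 𝒵] (L : ℕ)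
    (P : Measure Ω) (N : ℕ → Ω → ℕ) (Z : ℕ → ℕ → Ω → 𝒵) : Prop :=
  (∀ σ : Equiv.Perm (Fin L),
      Measure.map (fun ω => fun k : Fin L => hierData L N Z ω (σ k)) P
        = Measure.map (hierData L N Z) P) ∧
  (∀ k, k < L → ∀ m : ℕ, 0 < P {ω | N k ω = m} → ∀ σ : Equiv.Perm (Fin m),
      Measure.map
          (hierData L N fun k' i => if k' = k then Z k' (permExt σ i) else Z k' i)
          (ProbabilityTheory.cond P {ω | N k ω = m})
        = Measure.map (hierData L N Z) (ProbabilityTheory.cond P {ω | N k ω = m}))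

/-- The `(1-β)`-quantile `Q_{1-β}(μ) = inf {t : μ((-∞, t]) ≥ 1-β}` of a distribution `μ`
on the extended real line. -/
def erealQuantile (β : ℝ) (μ : Measure EReal) : EReal :=
  sInf {t : EReal | ENNReal.ofReal β ≤ μ (Set.Iic t)}

/-- The Pooling-CDFs threshold: the `(1-α)`-quantile of the pooled empirical distribution
`Σ_{k=K₀}^{K-1} Σ_{i<n k} (1/(K₁·(n k))) δ_{sc k i}`, where `K₁ = K - K₀`. -/
def poolThreshold (α : ℝ) (K₀ K : ℕ) (n : ℕ → ℕ) (sc : ℕ → ℕ → ℝ) : EReal :=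
  erealQuantile (1 - α)
    (∑ k ∈ Finset.Ico K₀ K, ∑ i ∈ Finset.range (n k),
      (((K - K₀ : ℕ) : ℝ≥0∞) * (n k : ℝ≥0∞))⁻¹ • Measure.dirac ((sc k i : EReal)))

open Finset

section PooledMass

variable {ι γ : Type*} [LinearOrder γ]

/-- The pooled empirical CDF of the groups in `J` strictly below `x`, unnormalized: each nonempty
group carries total mass one. -/
def pooledMassBelow (J : Finset ι) (n : ι → ℕ) (s : ι → ℕ → γ) (x : γ) : ℝ≥0∞ :=
  ∑ k ∈ J, (n k : ℝ≥0∞)⁻¹ * #{i ∈ range (n k) | s k i < x}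

lemma inv_mul_card_filter_range_le_one (m : ℕ) (p : ℕ → Prop) [DecidablePred p] :
    (m : ℝ≥0∞)⁻¹ * #{i ∈ range m | p i} ≤ 1 :=
  calc (m : ℝ≥0∞)⁻¹ * #{i ∈ range m | p i} ≤ (m : ℝ≥0∞)⁻¹ * m := by
        gcongr
        exact_mod_cast (card_filter_le _ _).trans (card_range m).le
    _ ≤ 1 := ENNReal.inv_mul_le_one _

lemma inv_mul_card_filter_range_mono {m : ℕ} {p q : ℕ → Prop} [DecidablePred p]
    [DecidablePred q] (h : ∀ i < m, p i → q i) :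
    (m : ℝ≥0∞)⁻¹ * #{i ∈ range m | p i} ≤ (m : ℝ≥0∞)⁻¹ * #{i ∈ range m | q i} :=
  mul_le_mul_right (Nat.cast_le.2 (card_le_card (monotone_filter_right _ fun i hi =>
    h i (mem_range.1 hi)))) _

lemma pooledMassBelow_map {ι' : Type*} (e : ι ↪ ι') (J : Finset ι) (n : ι' → ℕ)
    (s : ι' → ℕ → γ) (x : γ) :
    pooledMassBelow (J.map e) n s x = pooledMassBelow J (n ∘ e) (fun k => s (e k)) x :=
  sum_map J e _

lemma pooledMassBelow_congr {J : Finset ι} {n n' : ι → ℕ} {s s' : ι → ℕ → γ} {x x' : γ}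
    (hn : ∀ k ∈ J, n k = n' k) (hs : ∀ k ∈ J, s k = s' k) (hx : x = x') :
    pooledMassBelow J n s x = pooledMassBelow J n' s' x' :=
  sum_congr rfl fun k hk => by rw [hn k hk, hs k hk, hx]

lemma pooledMassBelow_le_erase_add_one [DecidableEq ι] (J : Finset ι) (n : ι → ℕ)
    (s : ι → ℕ → γ) (j : ι) (x : γ) :
    pooledMassBelow J n s x ≤ pooledMassBelow (J.erase j) n s x + 1 := by
  by_cases hj : j ∈ J
  · rw [pooledMassBelow, ← add_sum_erase J _ hj, add_comm]
    exact add_le_add le_rfl (inv_mul_card_filter_range_le_one _ _)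
  · rw [erase_eq_of_notMem hj]
    exact le_self_add

variable {J : Finset ι} {n : ι → ℕ} {s : ι → ℕ → γ}

lemma sum_inv_mul_card_eq_le_one
    (hs : ∀ j ∈ J, ∀ k ∈ J, j ≠ k → ∀ i < n j, ∀ i' < n k, s j i ≠ s k i') (v : γ) :
    ∑ j ∈ J, (n j : ℝ≥0∞)⁻¹ * #{i ∈ range (n j) | s j i = v} ≤ 1 := by
  by_cases hv : ∃ k ∈ J, ∃ i' < n k, s k i' = v
  · obtain ⟨k, hk, i', hi', rfl⟩ := hv
    rw [sum_eq_single_of_mem k hk]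
    · exact inv_mul_card_filter_range_le_one _ _
    · intro j hj hjk
      have : {i ∈ range (n j) | s j i = s k i'} = ∅ :=
        filter_eq_empty_iff.2 fun i hi => hs j hj k hk hjk i (mem_range.1 hi) i' hi'
      simp [this]
  · push Not at hv
    refine (sum_eq_zero fun j hj => ?_).trans_le zero_le_one
    rw [filter_eq_empty_iff.2 fun i hi => hv j hj i (mem_range.1 hi)]
    simp

lemma sum_inv_mul_card_le_le_pooledMassBelow_add_one
    (hs : ∀ j ∈ J, ∀ k ∈ J, j ≠ k → ∀ i < n j, ∀ i' < n k, s j i ≠ s k i') (v : γ) :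
    ∑ j ∈ J, (n j : ℝ≥0∞)⁻¹ * #{i ∈ range (n j) | s j i ≤ v}
      ≤ pooledMassBelow J n s v + 1 :=
  calc ∑ j ∈ J, (n j : ℝ≥0∞)⁻¹ * #{i ∈ range (n j) | s j i ≤ v}
      ≤ ∑ j ∈ J, ((n j : ℝ≥0∞)⁻¹ * #{i ∈ range (n j) | s j i < v}
          + (n j : ℝ≥0∞)⁻¹ * #{i ∈ range (n j) | s j i = v}) := by
        refine sum_le_sum fun j _ => ?_
        rw [← mul_add]
        gcongr
        have : {i ∈ range (n j) | s j i ≤ v}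
            ⊆ {i ∈ range (n j) | s j i < v} ∪ {i ∈ range (n j) | s j i = v} := by
          rw [← filter_or]
          exact monotone_filter_right _ fun i _ h => h.lt_or_eq
        exact_mod_cast (card_le_card this).trans (card_union_le _ _)
    _ ≤ pooledMassBelow J n s v + 1 := by
        rw [sum_add_distrib]
        exact add_le_add le_rfl (sum_inv_mul_card_eq_le_one hs v)

lemma sum_inv_mul_card_pooledMassBelow_lt_le
    (hs : ∀ j ∈ J, ∀ k ∈ J, j ≠ k → ∀ i < n j, ∀ i' < n k, s j i ≠ s k i') (c : ℝ≥0∞) :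
    ∑ j ∈ J, (n j : ℝ≥0∞)⁻¹ * #{i ∈ range (n j) | pooledMassBelow J n s (s j i) < c}
      ≤ c + 1 := by
  set S := J.sigma fun j => {i ∈ range (n j) | pooledMassBelow J n s (s j i) < c}
  have hmemS {j i} (hj : j ∈ J) (hi : i < n j) (h : pooledMassBelow J n s (s j i) < c) :
      (⟨j, i⟩ : Σ _ : ι, ℕ) ∈ S :=
    mem_sigma.2 ⟨hj, mem_filter.2 ⟨mem_range.2 hi, h⟩⟩
  rcases S.eq_empty_or_nonempty with hS | hS
  · refine (sum_eq_zero fun j hj => ?_).trans_le zero_le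
    rw [filter_eq_empty_iff.2 fun i hi h => by simpa [hS] using hmemS hj (mem_range.1 hi) h]
    simp
  -- every counted score is at most the largest one, whose strict lower mass is below `c`
  obtain ⟨p, hpS, hmax⟩ := S.exists_max_image (fun p => s p.1 p.2) hS
  have hpc : pooledMassBelow J n s (s p.1 p.2) < c := (mem_filter.1 (mem_sigma.1 hpS).2).2
  calc ∑ j ∈ J, (n j : ℝ≥0∞)⁻¹ * #{i ∈ range (n j) | pooledMassBelow J n s (s j i) < c}
      ≤ ∑ j ∈ J, (n j : ℝ≥0∞)⁻¹ * #{i ∈ range (n j) | s j i ≤ s p.1 p.2} :=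
        sum_le_sum fun j hj => inv_mul_card_filter_range_mono fun i hi h =>
          hmax _ (hmemS hj hi h)
    _ ≤ c + 1 := (sum_inv_mul_card_le_le_pooledMassBelow_add_one hs _).trans (by gcongr)

lemma sum_inv_mul_card_pooledMassBelow_erase_lt_le [DecidableEq ι]
    (hs : ∀ j ∈ J, ∀ k ∈ J, j ≠ k → ∀ i < n j, ∀ i' < n k, s j i ≠ s k i') (c : ℝ≥0∞) :
    ∑ j ∈ J, (n j : ℝ≥0∞)⁻¹ * #{i ∈ range (n j) | pooledMassBelow (J.erase j) n s (s j i) < c}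
      ≤ c + 2 :=
  calc ∑ j ∈ J, (n j : ℝ≥0∞)⁻¹ * #{i ∈ range (n j) | pooledMassBelow (J.erase j) n s (s j i) < c}
      ≤ ∑ j ∈ J, (n j : ℝ≥0∞)⁻¹ * #{i ∈ range (n j) | pooledMassBelow J n s (s j i) < c + 1} :=
        sum_le_sum fun j _ => inv_mul_card_filter_range_mono fun i _ h =>
          (pooledMassBelow_le_erase_add_one J n s j _).trans_lt
            (ENNReal.add_lt_add_right ENNReal.one_ne_top h)
    _ ≤ c + 2 := by
        rw [← one_add_one_eq_two, ← add_assoc]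
        exact sum_inv_mul_card_pooledMassBelow_lt_le hs _

end PooledMass

/-- For a finitely supported distribution, the mass strictly below `x` is already the mass of
some `Iic t` with `t < x`; so if it reached level `β`, the quantile would lie below `x`. -/
lemma measure_Iio_lt_of_le_erealQuantile {κ : Type*} (S : Finset κ) (w : κ → ℝ≥0∞)
    (f : κ → ℝ) (β : ℝ) {x : ℝ}
    (hx : (x : EReal) ≤ erealQuantile β (∑ p ∈ S, w p • Measure.dirac (f p : EReal))) :
    (∑ p ∈ S, w p • Measure.dirac (f p : EReal)) (Set.Iio x) < ENNReal.ofReal β := by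
  set F := insert (x - 1) ({p ∈ S | f p < x}.image f)
  set t := F.max' (insert_nonempty _ _)
  have htx : t < x := (F.max'_lt_iff _).2 fun y hy => by
    rcases mem_insert.1 hy with rfl | hy
    · linarith
    · obtain ⟨p, hp, rfl⟩ := mem_image.1 hy
      exact (mem_filter.1 hp).2
  have hIio : (∑ p ∈ S, w p • Measure.dirac (f p : EReal)) (Set.Iio x)
      ≤ (∑ p ∈ S, w p • Measure.dirac (f p : EReal)) (Set.Iic t) := by
    simp only [Measure.coe_finsetSum, Finset.sum_apply, Measure.smul_apply, smul_eq_mul,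
      Measure.dirac_apply' _ measurableSet_Iio, Measure.dirac_apply' _ measurableSet_Iic]
    refine sum_le_sum fun p hp => mul_le_mul_right ?_ _
    by_cases hpx : f p < x
    · have hpt : f p ≤ t := F.le_max' _ (mem_insert_of_mem (mem_image_of_mem f
        (mem_filter.2 ⟨hp, hpx⟩)))
      simp [hpx, hpt]
    · simp [Set.indicator_apply, hpx]
  by_contra! h
  have hxt : (x : EReal) ≤ t := hx.trans (sInf_le (h.trans hIio))
  exact htx.not_ge (EReal.coe_le_coe_iff.1 hxt)

lemma pooledMassBelow_lt_of_le_poolThreshold {α : ℝ} {K₀ K : ℕ} (hK : K₀ < K) {n : ℕ → ℕ}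
    {sc : ℕ → ℕ → ℝ} {x : ℝ} (hx : (x : EReal) ≤ poolThreshold α K₀ K n sc) :
    pooledMassBelow (Ico K₀ K) n sc x < (K - K₀ : ℕ) * ENNReal.ofReal (1 - α) := by
  set K₁ : ℝ≥0∞ := ((K - K₀ : ℕ) : ℝ≥0∞)
  have hmass : (∑ k ∈ Ico K₀ K, ∑ i ∈ range (n k),
      (K₁ * n k)⁻¹ • Measure.dirac (sc k i : EReal)) (Set.Iio x)
      = pooledMassBelow (Ico K₀ K) n sc x / K₁ := by
    simp only [Measure.coe_finsetSum, Finset.sum_apply, Measure.smul_apply, smul_eq_mul,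
      Measure.dirac_apply' _ measurableSet_Iio, pooledMassBelow, div_eq_mul_inv, sum_mul,
      card_filter, Nat.cast_sum, mul_sum]
    refine sum_congr rfl fun k _ => sum_congr rfl fun i _ => ?_
    rw [ENNReal.mul_inv (Or.inr (ENNReal.natCast_ne_top _)) (Or.inl (ENNReal.natCast_ne_top _))]
    by_cases h : sc k i < x <;> simp [h, K₁, mul_comm]
  have h := measure_Iio_lt_of_le_erealQuantile _ _ _ _ (by rwa [poolThreshold, sum_sigma'] at hx)
  rw [← sum_sigma' (Ico K₀ K) (fun k => range (n k)) fun k i =>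
    (K₁ * n k)⁻¹ • Measure.dirac (sc k i : EReal), hmass,
    ENNReal.div_lt_iff (Or.inl (Nat.cast_ne_zero.2 (by omega))) (Or.inl (ENNReal.natCast_ne_top _)),
    mul_comm] at h
  exact h

section Averaging

variable {Ω : Type*} {p : ℕ → Ω → Prop} [∀ i ω, Decidable (p i ω)]

lemma natCast_card_filter_range_eq_sum_indicator (m : ℕ) (ω : Ω) :
    (#{i ∈ range m | p i ω} : ℝ≥0∞) = ∑ i ∈ range m, {ω | p i ω}.indicator 1 ω := by
  simp only [card_filter, Nat.cast_sum, Set.indicator_apply, Set.mem_ofPred_eq]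
  push_cast
  rfl

variable [MeasurableSpace Ω]

lemma measurable_inv_mul_card_filter_range {n : Ω → ℕ} (hn : Measurable n)
    (hp : ∀ i, MeasurableSet {ω | p i ω}) :
    Measurable fun ω => (n ω : ℝ≥0∞)⁻¹ * #{i ∈ range (n ω) | p i ω} := by
  have hF (m : ℕ) : Measurable fun ω => (m : ℝ≥0∞)⁻¹ * #{i ∈ range m | p i ω} := by
    simp only [natCast_card_filter_range_eq_sum_indicator]
    exact (Finset.measurable_sum _ fun i _ => measurable_const.indicator (hp i)).const_mul _
  have hF' : Measurable fun q : ℕ × Ω => (q.1 : ℝ≥0∞)⁻¹ * #{i ∈ range q.1 | p i q.2} :=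
    measurable_from_prod_countable_right hF
  exact hF'.comp (f := fun ω => (n ω, ω)) (hn.prodMk measurable_id)

lemma measure_eq_lintegral_inv_mul_card_filter_range {μ : Measure Ω} {N : Ω → ℕ}
    (hN : Measurable N) (hNpos : ∀ ω, 0 < N ω) (hp : ∀ i, MeasurableSet {ω | p i ω})
    (hexch : ∀ m, ∀ i < m,
      μ ({ω | N ω = m} ∩ {ω | p i ω}) = μ ({ω | N ω = m} ∩ {ω | p 0 ω})) :
    μ {ω | p 0 ω} = ∫⁻ ω, (N ω : ℝ≥0∞)⁻¹ * #{i ∈ range (N ω) | p i ω} ∂μ := by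
  have hNm (m : ℕ) : MeasurableSet {ω | N ω = m} := hN (measurableSet_singleton m)
  have hsplit (f : Ω → ℝ≥0∞) : ∫⁻ ω, f ω ∂μ = ∑' m, ∫⁻ ω in {ω | N ω = m}, f ω ∂μ := by
    rw [← lintegral_iUnion hNm (fun m m' h => Set.disjoint_left.2 fun ω h1 h2 =>
      h (h1.symm.trans h2)), Set.iUnion_eq_univ_iff.2 fun ω => ⟨N ω, rfl⟩, Measure.restrict_univ]
  have hint (m i : ℕ) : ∫⁻ ω in {ω | N ω = m}, {ω | p i ω}.indicator 1 ω ∂μ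
      = μ ({ω | N ω = m} ∩ {ω | p i ω}) := by
    rw [lintegral_indicator_one (hp i), Measure.restrict_apply (hp i), Set.inter_comm]
  have hind (i : ℕ) : Measurable ({ω | p i ω}.indicator 1 : Ω → ℝ≥0∞) :=
    measurable_const.indicator (hp i)
  rw [← lintegral_indicator_one (hp 0), hsplit, hsplit]
  refine tsum_congr fun m => ?_
  rcases Nat.eq_zero_or_pos m with rfl | hm
  · have : {ω | N ω = 0} = ∅ := Set.eq_empty_of_forall_notMem fun ω h => (hNpos ω).ne' h
    simp [this]
  calc ∫⁻ ω in {ω | N ω = m}, {ω | p 0 ω}.indicator 1 ω ∂μ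
      = (m : ℝ≥0∞)⁻¹ * ∑ i ∈ range m, μ ({ω | N ω = m} ∩ {ω | p i ω}) := by
        rw [sum_congr rfl fun i hi => hexch m i (mem_range.1 hi), sum_const, card_range,
          nsmul_eq_mul, ← mul_assoc, ENNReal.inv_mul_cancel (Nat.cast_ne_zero.2 hm.ne')
          (ENNReal.natCast_ne_top m), one_mul, hint]
    _ = ∫⁻ ω in {ω | N ω = m}, (m : ℝ≥0∞)⁻¹ * ∑ i ∈ range m, {ω | p i ω}.indicator 1 ω ∂μ := by
        rw [lintegral_const_mul _ (Finset.measurable_sum _ fun i _ => hind i),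
          lintegral_finsetSum _ fun i _ => hind i]
        simp only [hint]
    _ = ∫⁻ ω in {ω | N ω = m}, (N ω : ℝ≥0∞)⁻¹ * #{i ∈ range (N ω) | p i ω} ∂μ :=
        setLIntegral_congr_fun (hNm m) fun ω (hω : N ω = m) => by
          rw [hω, natCast_card_filter_range_eq_sum_indicator]

end Averaging

section GroupData

variable {𝒵 : Type*} {K₀ L : ℕ}

def trainingData (h : K₀ ≤ L) (d : Fin L → ℕ × (ℕ → 𝒵)) : Fin K₀ → ℕ × (ℕ → 𝒵) :=
  fun k => d (Fin.castLE h k)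

def groupScores (A : (Fin K₀ → ℕ × (ℕ → 𝒵)) → 𝒵 → ℝ) (h : K₀ ≤ L)
    (d : Fin L → ℕ × (ℕ → 𝒵)) (k : Fin L) (i : ℕ) : ℝ :=
  A (trainingData h d) ((d k).2 i)

def heldOutGroups (K₀ L : ℕ) : Finset (Fin L) := {k | K₀ ≤ (k : ℕ)}

def leaveOneOutMass (A : (Fin K₀ → ℕ × (ℕ → 𝒵)) → 𝒵 → ℝ) (h : K₀ ≤ L)
    (d : Fin L → ℕ × (ℕ → 𝒵)) (j : Fin L) (i : ℕ) : ℝ≥0∞ :=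
  pooledMassBelow ((heldOutGroups K₀ L).erase j) (fun k => (d k).1) (groupScores A h d)
    (groupScores A h d j i)

def permuteGroup (j : Fin L) (π : ℕ → ℕ) (d : Fin L → ℕ × (ℕ → 𝒵)) : Fin L → ℕ × (ℕ → 𝒵) :=
  Function.update d j ((d j).1, (d j).2 ∘ π)

lemma map_valEmbedding_heldOutGroups :
    (heldOutGroups K₀ L).map Fin.valEmbedding = Ico K₀ L := by
  ext k
  simp only [heldOutGroups, mem_map, mem_filter, mem_univ, true_and, Fin.valEmbedding_apply,
    mem_Ico]
  exact ⟨fun ⟨k', hk', hk⟩ => hk ▸ ⟨hk', k'.2⟩, fun hk => ⟨⟨k, hk.2⟩, hk.1, rfl⟩⟩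

lemma card_heldOutGroups : #(heldOutGroups K₀ L) = L - K₀ := by
  rw [← card_map Fin.valEmbedding, map_valEmbedding_heldOutGroups, Nat.card_Ico]

lemma leaveOneOutMass_comp_perm (A : (Fin K₀ → ℕ × (ℕ → 𝒵)) → 𝒵 → ℝ) (h : K₀ ≤ L)
    {σ : Equiv.Perm (Fin L)} (hσ : ∀ k : Fin L, (k : ℕ) < K₀ → σ k = k)
    (d : Fin L → ℕ × (ℕ → 𝒵)) (j : Fin L) (i : ℕ) :
    leaveOneOutMass A h (fun k => d (σ k)) j i = leaveOneOutMass A h d (σ j) i := by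
  have hscores : groupScores A h (fun k => d (σ k)) = fun k => groupScores A h d (σ k) := by
    have htrain : trainingData h (fun k => d (σ k)) = trainingData h d :=
      funext fun k => congrArg d (hσ _ k.2)
    funext k i'
    rw [groupScores, groupScores, htrain]
  have hheldOut : (heldOutGroups K₀ L).map σ.toEmbedding = heldOutGroups K₀ L := by
    refine eq_of_subset_of_card_le (fun k hk => ?_) (card_map _).ge
    obtain ⟨k', hk', rfl⟩ := mem_map.1 hk
    simp only [heldOutGroups, mem_filter, mem_univ, true_and, Equiv.coe_toEmbedding] at hk' ⊢
    by_contra! hlt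
    exact (hk'.trans_lt (σ.injective (hσ _ hlt) ▸ hlt)).false
  have herase : ((heldOutGroups K₀ L).erase j).map σ.toEmbedding
      = (heldOutGroups K₀ L).erase (σ j) := by
    rw [map_erase, hheldOut]
    rfl
  rw [leaveOneOutMass, leaveOneOutMass, hscores, ← herase, pooledMassBelow_map]
  rfl

lemma leaveOneOutMass_permuteGroup (A : (Fin K₀ → ℕ × (ℕ → 𝒵)) → 𝒵 → ℝ) (h : K₀ ≤ L)
    {j : Fin L} (hj : K₀ ≤ (j : ℕ)) (π : ℕ → ℕ) (d : Fin L → ℕ × (ℕ → 𝒵)) (i : ℕ) :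
    leaveOneOutMass A h (permuteGroup j π d) j i = leaveOneOutMass A h d j (π i) := by
  have htrain : trainingData h (permuteGroup j π d) = trainingData h d :=
    funext fun k => Function.update_of_ne (fun hk => (hj.trans_lt (hk ▸ k.2)).false) _ _
  refine pooledMassBelow_congr (fun k hk => ?_) (fun k hk => ?_) ?_
  · simp [permuteGroup, Function.update_of_ne (ne_of_mem_erase hk)]
  · funext i'
    simp only [groupScores, htrain]
    simp [permuteGroup, Function.update_of_ne (ne_of_mem_erase hk)]
  · simp only [groupScores, htrain]
    simp [permuteGroup]

variable [MeasurableSpace 𝒵]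

lemma measurable_trainingData (h : K₀ ≤ L) : Measurable (trainingData (𝒵 := 𝒵) h) :=
  measurable_pi_lambda _ fun _ => measurable_pi_apply _

lemma measurable_groupScores {A : (Fin K₀ → ℕ × (ℕ → 𝒵)) → 𝒵 → ℝ}
    (hA : Measurable fun p : (Fin K₀ → ℕ × (ℕ → 𝒵)) × 𝒵 => A p.1 p.2) (h : K₀ ≤ L)
    (k : Fin L) (i : ℕ) :
    Measurable fun d : Fin L → ℕ × (ℕ → 𝒵) => groupScores A h d k i :=
  hA.comp (f := fun d => (trainingData h d, (d k).2 i)) ((measurable_trainingData h).prodMk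
    ((measurable_pi_apply i).comp (measurable_pi_apply k).snd))

lemma measurable_leaveOneOutMass {A : (Fin K₀ → ℕ × (ℕ → 𝒵)) → 𝒵 → ℝ}
    (hA : Measurable fun p : (Fin K₀ → ℕ × (ℕ → 𝒵)) × 𝒵 => A p.1 p.2) (h : K₀ ≤ L)
    (j : Fin L) (i : ℕ) :
    Measurable fun d : Fin L → ℕ × (ℕ → 𝒵) => leaveOneOutMass A h d j i := by
  unfold leaveOneOutMass pooledMassBelow
  exact Finset.measurable_sum _ fun k _ => measurable_inv_mul_card_filter_range
    (measurable_pi_apply k).fst fun i' =>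
      measurableSet_lt (measurable_groupScores hA h k i') (measurable_groupScores hA h j i)

lemma measurableSet_leaveOneOutMass_lt {A : (Fin K₀ → ℕ × (ℕ → 𝒵)) → 𝒵 → ℝ}
    (hA : Measurable fun p : (Fin K₀ → ℕ × (ℕ → 𝒵)) × 𝒵 => A p.1 p.2) (h : K₀ ≤ L)
    (j : Fin L) (i : ℕ) (c : ℝ≥0∞) :
    MeasurableSet {d : Fin L → ℕ × (ℕ → 𝒵) | leaveOneOutMass A h d j i < c} :=
  measurableSet_lt (measurable_leaveOneOutMass hA h j i) measurable_const

end GroupData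

section HierExch

variable {Ω 𝒵 : Type*} {L : ℕ} {N : ℕ → Ω → ℕ} {Z : ℕ → ℕ → Ω → 𝒵}

lemma hierData_permuteGroup (j : Fin L) (π : ℕ → ℕ) (ω : Ω) :
    hierData L N (fun k i => if k = j then Z k (π i) else Z k i) ω
      = permuteGroup j π (hierData L N Z ω) := by
  funext k
  by_cases hk : k = j
  · subst hk
    simp only [hierData, ↓reduceIte, permuteGroup, Function.update_self, Prod.mk.injEq, true_and]
    rfl
  · simp [hierData, permuteGroup, Function.update_of_ne hk, Fin.val_ne_of_ne hk]

variable [MeasurableSpace Ω] [MeasurableSpace 𝒵] {P : Measure Ω}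

lemma measurable_hierData (hNmeas : ∀ k, Measurable (N k)) (hZmeas : ∀ k i, Measurable (Z k i)) :
    Measurable (hierData L N Z) :=
  measurable_pi_lambda _ fun k => (hNmeas k).prodMk (measurable_pi_lambda _ fun i => hZmeas k i)

lemma HierExch.measure_preimage_perm (hex : HierExch L P N Z) (hNmeas : ∀ k, Measurable (N k))
    (hZmeas : ∀ k i, Measurable (Z k i)) (σ : Equiv.Perm (Fin L)) {S : Set (Fin L → ℕ × (ℕ → 𝒵))}
    (hS : MeasurableSet S) :
    P ((fun ω k => hierData L N Z ω (σ k)) ⁻¹' S) = P (hierData L N Z ⁻¹' S) := by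
  have hd := measurable_hierData (L := L) hNmeas hZmeas
  have hdσ : Measurable fun ω k => hierData L N Z ω (σ k) :=
    measurable_pi_lambda _ fun k => (measurable_pi_apply (σ k)).comp hd
  rw [← Measure.map_apply hdσ hS, hex.1 σ, Measure.map_apply hd hS]

lemma HierExch.measure_inter_preimage_permuteGroup [IsFiniteMeasure P] (hex : HierExch L P N Z)
    (hNmeas : ∀ k, Measurable (N k)) (hZmeas : ∀ k i, Measurable (Z k i)) (j : Fin L) (m : ℕ)
    (σ : Equiv.Perm (Fin m)) {S : Set (Fin L → ℕ × (ℕ → 𝒵))} (hS : MeasurableSet S) :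
    P ({ω | N j ω = m} ∩ (fun ω => permuteGroup j (permExt σ) (hierData L N Z ω)) ⁻¹' S)
      = P ({ω | N j ω = m} ∩ hierData L N Z ⁻¹' S) := by
  have hm : MeasurableSet {ω | N j ω = m} := hNmeas j (measurableSet_singleton m)
  rcases eq_zero_or_pos (P {ω | N j ω = m}) with hP | hP
  · simp [measure_inter_null_of_null_left _ hP]
  have hd := measurable_hierData (L := L) hNmeas hZmeas
  have hd' : Measurable (hierData L N fun k i => if k = j then Z k (permExt σ i) else Z k i) :=
    measurable_hierData hNmeas fun k i => by split_ifs <;> exact hZmeas _ _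
  rw [← cond_mul_eq_inter hm, ← cond_mul_eq_inter hm]
  congr 1
  simp only [← hierData_permuteGroup]
  rw [← Measure.map_apply hd' hS, hex.2 j j.2 m hP σ, Measure.map_apply hd hS]

end HierExch

section LeaveOneOut

variable {Ω 𝒵 : Type*} [MeasurableSpace Ω] [MeasurableSpace 𝒵] {K₀ L : ℕ} {P : Measure Ω}
  {N : ℕ → Ω → ℕ} {Z : ℕ → ℕ → Ω → 𝒵} {A : (Fin K₀ → ℕ × (ℕ → 𝒵)) → 𝒵 → ℝ}

lemma HierExch.measure_leaveOneOutMass_lt_eq (hex : HierExch L P N Z)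
    (hNmeas : ∀ k, Measurable (N k)) (hZmeas : ∀ k i, Measurable (Z k i))
    (hA : Measurable fun p : (Fin K₀ → ℕ × (ℕ → 𝒵)) × 𝒵 => A p.1 p.2) (h : K₀ ≤ L)
    {j j' : Fin L} (hj : K₀ ≤ (j : ℕ)) (hj' : K₀ ≤ (j' : ℕ)) (c : ℝ≥0∞) :
    P {ω | leaveOneOutMass A h (hierData L N Z ω) j 0 < c}
      = P {ω | leaveOneOutMass A h (hierData L N Z ω) j' 0 < c} := by
  have hσ (k : Fin L) (hk : (k : ℕ) < K₀) : Equiv.swap j j' k = k :=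
    Equiv.swap_apply_of_ne_of_ne (Fin.ne_of_val_ne (by omega)) (Fin.ne_of_val_ne (by omega))
  have := hex.measure_preimage_perm hNmeas hZmeas (Equiv.swap j j')
    (measurableSet_leaveOneOutMass_lt hA h j' 0 c)
  simp only [Set.preimage_ofPred_eq, leaveOneOutMass_comp_perm A h hσ,
    Equiv.swap_apply_right] at this
  exact this

lemma HierExch.measure_inter_leaveOneOutMass_lt_eq [IsFiniteMeasure P]
    (hex : HierExch L P N Z) (hNmeas : ∀ k, Measurable (N k)) (hZmeas : ∀ k i, Measurable (Z k i))
    (hA : Measurable fun p : (Fin K₀ → ℕ × (ℕ → 𝒵)) × 𝒵 => A p.1 p.2) (h : K₀ ≤ L)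
    {j : Fin L} (hj : K₀ ≤ (j : ℕ)) {m i : ℕ} (hi : i < m) (c : ℝ≥0∞) :
    P ({ω | N j ω = m} ∩ {ω | leaveOneOutMass A h (hierData L N Z ω) j i < c})
      = P ({ω | N j ω = m} ∩ {ω | leaveOneOutMass A h (hierData L N Z ω) j 0 < c}) := by
  set σ := Equiv.swap (⟨0, by omega⟩ : Fin m) ⟨i, hi⟩
  have hσ : permExt σ 0 = i := by simp [permExt, σ, show 0 < m by omega]
  have := hex.measure_inter_preimage_permuteGroup hNmeas hZmeas j m σ
    (measurableSet_leaveOneOutMass_lt hA h j 0 c)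
  simp only [Set.preimage_ofPred_eq, leaveOneOutMass_permuteGroup A h hj, hσ] at this
  exact this

theorem HierExch.measure_leaveOneOutMass_lt_le [IsProbabilityMeasure P]
    (hex : HierExch L P N Z) (hNmeas : ∀ k, Measurable (N k)) (hZmeas : ∀ k i, Measurable (Z k i))
    (hNpos : ∀ k ω, 0 < N k ω) (hA : Measurable fun p : (Fin K₀ → ℕ × (ℕ → 𝒵)) × 𝒵 => A p.1 p.2)
    (h : K₀ ≤ L) (hdist : ∀ᵐ ω ∂P, ∀ j ∈ heldOutGroups K₀ L, ∀ k ∈ heldOutGroups K₀ L,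
      j ≠ k → ∀ i < N j ω, ∀ i' < N k ω,
        groupScores A h (hierData L N Z ω) j i ≠ groupScores A h (hierData L N Z ω) k i')
    {j : Fin L} (hj : K₀ ≤ (j : ℕ)) (c : ℝ≥0∞) :
    P {ω | leaveOneOutMass A h (hierData L N Z ω) j 0 < c}
      ≤ (#(heldOutGroups K₀ L) : ℝ≥0∞)⁻¹ * (c + 2) := by
  set G := heldOutGroups K₀ L
  have hmem {k : Fin L} (hk : k ∈ G) : K₀ ≤ (k : ℕ) := (mem_filter.1 hk).2
  have hE (k : Fin L) (i : ℕ) :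
      MeasurableSet {ω | leaveOneOutMass A h (hierData L N Z ω) k i < c} :=
    measurable_hierData hNmeas hZmeas (measurableSet_leaveOneOutMass_lt hA h k i c)
  have hsum : #G * P {ω | leaveOneOutMass A h (hierData L N Z ω) j 0 < c}
      = ∫⁻ ω, ∑ k ∈ G, (N k ω : ℝ≥0∞)⁻¹
          * #{i ∈ range (N k ω) | leaveOneOutMass A h (hierData L N Z ω) k i < c} ∂P := by
    rw [← nsmul_eq_mul, ← sum_const, lintegral_finsetSum _ fun (k : Fin L) _ =>
      measurable_inv_mul_card_filter_range (hNmeas k) fun i => hE k i]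
    refine sum_congr rfl fun k hk => ?_
    rw [hex.measure_leaveOneOutMass_lt_eq hNmeas hZmeas hA h hj (hmem hk)]
    exact measure_eq_lintegral_inv_mul_card_filter_range (hNmeas k) (hNpos k) (hE k)
      fun m i hi => hex.measure_inter_leaveOneOutMass_lt_eq hNmeas hZmeas hA h (hmem hk) hi c
  have hbound : ∫⁻ ω, ∑ k ∈ G, (N k ω : ℝ≥0∞)⁻¹
      * #{i ∈ range (N k ω) | leaveOneOutMass A h (hierData L N Z ω) k i < c} ∂P ≤ c + 2 :=
    calc _ ≤ ∫⁻ _, c + 2 ∂P := lintegral_mono_ae <| hdist.mono fun ω hω =>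
          sum_inv_mul_card_pooledMassBelow_erase_lt_le hω c
      _ = c + 2 := by simp
  have hG : (#G : ℝ≥0∞) ≠ 0 := Nat.cast_ne_zero.2 (card_ne_zero_of_mem (s := G)
    (mem_filter.2 ⟨mem_univ j, hj⟩))
  rw [← ENNReal.mul_le_iff_le_inv hG (ENNReal.natCast_ne_top _), hsum]
  exact hbound

end LeaveOneOut

lemma leaveOneOutMass_hierData_last {Ω 𝒵 : Type*} {K₀ K : ℕ}
    (A : (Fin K₀ → ℕ × (ℕ → 𝒵)) → 𝒵 → ℝ) (h : K₀ ≤ K + 1) (N : ℕ → Ω → ℕ)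
    (Z : ℕ → ℕ → Ω → 𝒵) (ω : Ω) (i : ℕ) :
    leaveOneOutMass A h (hierData (K + 1) N Z ω) (Fin.last K) i
      = pooledMassBelow (Ico K₀ K) (fun k => N k ω)
          (fun k i => A (hierData K₀ N Z ω) (Z k i ω)) (A (hierData K₀ N Z ω) (Z K i ω)) := by
  have hJ : ((heldOutGroups K₀ (K + 1)).erase (Fin.last K)).map Fin.valEmbedding
      = Ico K₀ K := by
    rw [map_erase, map_valEmbedding_heldOutGroups]
    ext k
    simp only [mem_erase, mem_Ico, Fin.valEmbedding_apply, Fin.val_last]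
    omega
  rw [← hJ, pooledMassBelow_map]
  rfl

lemma inv_natCast_add_one_mul_eq_ofReal {α : ℝ} (hα : α ≤ 1) (k : ℕ) :
    ((k : ℝ≥0∞) + 1)⁻¹ * (k * ENNReal.ofReal (1 - α) + 2)
      = ENNReal.ofReal (1 - α + (1 + α) / (k + 1)) := by
  have hk : (0 : ℝ) < k + 1 := by positivity
  have h1α : 0 ≤ 1 - α := by linarith
  rw [← ENNReal.ofReal_natCast, ← ENNReal.ofReal_one, ← ENNReal.ofReal_add (by positivity)
    zero_le_one, ← ENNReal.ofReal_inv_of_pos hk, ← ENNReal.ofReal_mul (by positivity),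
    ← ENNReal.ofReal_ofNat 2, ← ENNReal.ofReal_add (by positivity) zero_le_two,
    ← ENNReal.ofReal_mul (by positivity)]
  congr 1
  field_simp
  ring

theorem pooling_cdfs_coverage_upper_general
    {𝒳 𝒴 Ω : Type*} [MeasurableSpace 𝒳] [MeasurableSpace 𝒴] [MeasurableSpace Ω]
    (P : Measure Ω) [IsProbabilityMeasure P]
    (K K₀ : ℕ) (hK₀ : K₀ < K)
    (N : ℕ → Ω → ℕ) (Z : ℕ → ℕ → Ω → 𝒳 × 𝒴)
    (hN : ∀ k ω, 1 ≤ N k ω)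
    (hNmeas : ∀ k, Measurable (N k)) (hZmeas : ∀ k i, Measurable (Z k i))
    (hexch : HierExch (K + 1) P N Z)
    (α : ℝ) (hα₁ : α < 1)
    (A : (Fin K₀ → ℕ × (ℕ → 𝒳 × 𝒴)) → 𝒳 × 𝒴 → ℝ)
    (hA : Measurable fun p : (Fin K₀ → ℕ × (ℕ → 𝒳 × 𝒴)) × (𝒳 × 𝒴) => A p.1 p.2)
    (hdist : ∀ᵐ ω ∂P, ∀ k k', K₀ ≤ k → k ≤ K → K₀ ≤ k' → k' ≤ K → k ≠ k' →
      ∀ i < N k ω, ∀ i' < N k' ω,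
        A (hierData K₀ N Z ω) (Z k i ω) ≠ A (hierData K₀ N Z ω) (Z k' i' ω)) :
    P {ω | (A (hierData K₀ N Z ω) (Z K 0 ω) : EReal)
        ≤ poolThreshold α K₀ K (fun k => N k ω)
            fun k i => A (hierData K₀ N Z ω) (Z k i ω)}
      ≤ ENNReal.ofReal (1 - α + (1 + α) / (((K - K₀ : ℕ) : ℝ) + 1)) := by
  have h : K₀ ≤ K + 1 := by omega
  have hdist' : ∀ᵐ ω ∂P, ∀ j ∈ heldOutGroups K₀ (K + 1), ∀ k ∈ heldOutGroups K₀ (K + 1),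
      j ≠ k → ∀ i < N j ω, ∀ i' < N k ω,
        groupScores A h (hierData (K + 1) N Z ω) j i
          ≠ groupScores A h (hierData (K + 1) N Z ω) k i' := by
    filter_upwards [hdist] with ω hω j hj k hk hjk
    exact hω j k (mem_filter.1 hj).2 (Nat.lt_succ_iff.1 j.2) (mem_filter.1 hk).2
      (Nat.lt_succ_iff.1 k.2) (Fin.val_ne_of_ne hjk)
  set c : ℝ≥0∞ := ((K - K₀ : ℕ) : ℝ≥0∞) * ENNReal.ofReal (1 - α)
  calc _ ≤ P {ω | leaveOneOutMass A h (hierData (K + 1) N Z ω) (Fin.last K) 0 < c} :=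
        measure_mono fun ω hω => by
          rw [Set.mem_ofPred_eq, leaveOneOutMass_hierData_last]
          exact pooledMassBelow_lt_of_le_poolThreshold hK₀ hω
    _ ≤ (#(heldOutGroups K₀ (K + 1)) : ℝ≥0∞)⁻¹ * (c + 2) :=
        hexch.measure_leaveOneOutMass_lt_le hNmeas hZmeas hN hA h hdist'
          (by rw [Fin.val_last]; omega) c
    _ = _ := by
        rw [card_heldOutGroups, show K + 1 - K₀ = K - K₀ + 1 by omega, Nat.cast_succ,
          inv_natCast_add_one_mul_eq_ofReal hα₁.le]

/-- **Proposition (Coverage of Pooling CDFs, upper bound).**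
Under hierarchical exchangeability, if moreover the scores of observations lying in
distinct groups (among the calibration and test groups) are almost surely distinct, the
Pooling-CDFs prediction set satisfies `P(Y_test ∈ Ĉ(X_test)) ≤ 1 - α + (1+α)/(K₁+1)`. -/
theorem pooling_cdfs_coverage_upper
    {𝒳 𝒴 Ω : Type*} [MeasurableSpace 𝒳] [MeasurableSpace 𝒴] [MeasurableSpace Ω]
    (P : Measure Ω) [IsProbabilityMeasure P]
    (K K₀ : ℕ) (hK₀ : K₀ < K)
    (N : ℕ → Ω → ℕ) (Z : ℕ → ℕ → Ω → 𝒳 × 𝒴)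
    (hN : ∀ k ω, 1 ≤ N k ω)
    (hNmeas : ∀ k, Measurable (N k)) (hZmeas : ∀ k i, Measurable (Z k i))
    (hexch : HierExch (K + 1) P N Z)
    (α : ℝ) (hα₀ : 0 < α) (hα₁ : α < 1)
    (A : (Fin K₀ → ℕ × (ℕ → 𝒳 × 𝒴)) → 𝒳 × 𝒴 → ℝ)
    (hA : Measurable fun p : (Fin K₀ → ℕ × (ℕ → 𝒳 × 𝒴)) × (𝒳 × 𝒴) => A p.1 p.2)
    (hdist : ∀ᵐ ω ∂P, ∀ k k', K₀ ≤ k → k ≤ K → K₀ ≤ k' → k' ≤ K → k ≠ k' →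
      ∀ i < N k ω, ∀ i' < N k' ω,
        A (hierData K₀ N Z ω) (Z k i ω) ≠ A (hierData K₀ N Z ω) (Z k' i' ω)) :
    P {ω | (A (hierData K₀ N Z ω) (Z K 0 ω) : EReal)
        ≤ poolThreshold α K₀ K (fun k => N k ω)
            fun k i => A (hierData K₀ N Z ω) (Z k i ω)}
      ≤ ENNReal.ofReal (1 - α + (1 + α) / (((K - K₀ : ℕ) : ℝ) + 1)) :=
  pooling_cdfs_coverage_upper_general P K K₀ hK₀ N Z hN hNmeas hZmeas hexch α hα₁ A hA hdist
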